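/- For every x ∈ ℝ^n, |E(x) − (2·E_MCHN(x) − log d)| ≤ max_{1≤i≤d} ‖ρ^i‖² − min_{1≤i≤d} ‖ρ^i‖². -/

import Mathlib

/-- With E(x) = −log ∑_i exp(−‖x−ρ^i‖²) and the MCHN energy at β = 2,
    |E(x) − (2·E_MCHN(x) − log d)| ≤ max_i ‖ρ^i‖² − min_i ‖ρ^i‖². -/
theorem energy_close_to_MCHN (n d : ℕ) (hn : 1 ≤ n) (hd : 1 ≤ d)
    (ρ : Fin d → EuclideanSpace ℝ (Fin n)) (x : EuclideanSpace ℝ (Fin n)) :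
    |(-Real.log (∑ i, Real.exp (-‖x - ρ i‖ ^ 2))) -
      (2 * (-(1 / 2) * Real.log (∑ i, Real.exp (2 * (inner ℝ (ρ i) x : ℝ)))
            + (1 / 2) * ‖x‖ ^ 2 + (1 / 2) * Real.log d
            + (1 / 2) * Finset.univ.sup' ⟨⟨0, hd⟩, Finset.mem_univ _⟩ (fun i => ‖ρ i‖ ^ 2))
        - Real.log d)| ≤
      Finset.univ.sup' ⟨⟨0, hd⟩, Finset.mem_univ _⟩ (fun i => ‖ρ i‖ ^ 2) -
        Finset.univ.inf' ⟨⟨0, hd⟩, Finset.mem_univ _⟩ (fun i => ‖ρ i‖ ^ 2) := by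
  have hne : (Finset.univ : Finset (Fin d)).Nonempty := ⟨⟨0, hd⟩, Finset.mem_univ _⟩
  set M : ℝ := Finset.univ.sup' ⟨⟨0, hd⟩, Finset.mem_univ _⟩ (fun i => ‖ρ i‖ ^ 2) with hM
  set m : ℝ := Finset.univ.inf' ⟨⟨0, hd⟩, Finset.mem_univ _⟩ (fun i => ‖ρ i‖ ^ 2) with hm
  set f : Fin d → ℝ := fun i => 2 * (inner ℝ (ρ i) x : ℝ) with hf
  set S : ℝ := ∑ i, Real.exp (f i) with hS
  set T : ℝ := ∑ i, Real.exp (f i - ‖ρ i‖ ^ 2) with hT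
  have hSpos : 0 < S := Finset.sum_pos (fun i _ => Real.exp_pos _) hne
  have hTpos : 0 < T := Finset.sum_pos (fun i _ => Real.exp_pos _) hne
  have hmM : m ≤ M := by
    obtain ⟨i, hi⟩ := hne
    have h1 : m ≤ ‖ρ i‖ ^ 2 := by rw [hm]; exact Finset.inf'_le (fun j => ‖ρ j‖ ^ 2) (Finset.mem_univ i)
    have h2 : ‖ρ i‖ ^ 2 ≤ M := by rw [hM]; exact Finset.le_sup' (fun j => ‖ρ j‖ ^ 2) (Finset.mem_univ i)
    linarith
  -- rewrite the term sum
  have hterm : ∀ i, Real.exp (-‖x - ρ i‖ ^ 2)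
      = Real.exp (-‖x‖ ^ 2) * Real.exp (f i - ‖ρ i‖ ^ 2) := by
    intro i
    rw [← Real.exp_add]
    congr 1
    have : ‖x - ρ i‖ ^ 2 = ‖x‖ ^ 2 - 2 * (inner ℝ x (ρ i) : ℝ) + ‖ρ i‖ ^ 2 :=
      norm_sub_sq_real x (ρ i)
    rw [this, hf, real_inner_comm]
    ring
  have hsum : (∑ i, Real.exp (-‖x - ρ i‖ ^ 2)) = Real.exp (-‖x‖ ^ 2) * T := by
    rw [hT, Finset.mul_sum]
    exact Finset.sum_congr rfl fun i _ => hterm i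
  have hlog : Real.log (∑ i, Real.exp (-‖x - ρ i‖ ^ 2)) = -‖x‖ ^ 2 + Real.log T := by
    rw [hsum, Real.log_mul (Real.exp_ne_zero _) (ne_of_gt hTpos), Real.log_exp]
  -- bounds on log T
  have hT_le : T ≤ Real.exp (-m) * S := by
    rw [hT, hS, Finset.mul_sum]
    apply Finset.sum_le_sum
    intro i _
    rw [← Real.exp_add]
    apply Real.exp_le_exp.2
    have : m ≤ ‖ρ i‖ ^ 2 := by rw [hm]; exact Finset.inf'_le (fun j => ‖ρ j‖ ^ 2) (Finset.mem_univ i)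
    linarith
  have hT_ge : Real.exp (-M) * S ≤ T := by
    rw [hT, hS, Finset.mul_sum]
    apply Finset.sum_le_sum
    intro i _
    rw [← Real.exp_add]
    apply Real.exp_le_exp.2
    have : ‖ρ i‖ ^ 2 ≤ M := by rw [hM]; exact Finset.le_sup' (fun j => ‖ρ j‖ ^ 2) (Finset.mem_univ i)
    linarith
  have hlogT_le : Real.log T ≤ -m + Real.log S := by
    calc Real.log T ≤ Real.log (Real.exp (-m) * S) := Real.log_le_log hTpos hT_le
    _ = -m + Real.log S := by
        rw [Real.log_mul (Real.exp_ne_zero _) (ne_of_gt hSpos), Real.log_exp]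
  have hlogT_ge : -M + Real.log S ≤ Real.log T := by
    calc -M + Real.log S
        = Real.log (Real.exp (-M) * S) := by
          rw [Real.log_mul (Real.exp_ne_zero _) (ne_of_gt hSpos), Real.log_exp]
    _ ≤ Real.log T := Real.log_le_log (by positivity) hT_ge
  rw [hlog]
  rw [abs_le]
  constructor <;> nlinarith [hlogT_le, hlogT_ge, hmM]
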